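/- Let θ₀ < θ₁, σ > 0, 0 < m̲₀ ≤ m̄₀ < 1, and let the payoffs satisfy u11 > u10 and u00 > u01 with u10 < u00 and u01 < u11. Define φ(t,z) = exp(((θ₁−θ₀)/σ²)·z − ((θ₁²−θ₀²)/(2σ²))·t) and, for m₀ ∈ (0,1), m_t(z; m₀) = (m₀/(1−m₀))·φ(t,z) / (1 + (m₀/(1−m₀))·φ(t,z)). Then there exist unique π̲, π̄ ∈ (0,1) and a unique function t ↦ z̃_t from [0,∞) to ℝ such that for every t ≥ 0: m_t(z̃_t; m̲₀) = π̲, m_t(z̃_t; m̄₀) = π̄, and π̲·u11 + (1−π̲)·u10 = π̄·u01 + (1−π̄)·u00. -/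

import Mathlib

/-- Likelihood ratio `φ(t,z) = exp(((θ₁−θ₀)/σ²)·z − ((θ₁²−θ₀²)/(2σ²))·t)`. -/
noncomputable def phi (θ₀ θ₁ σ t z : ℝ) : ℝ :=
  Real.exp (((θ₁ - θ₀) / σ ^ 2) * z - ((θ₁ ^ 2 - θ₀ ^ 2) / (2 * σ ^ 2)) * t)

/-- Bayesian posterior probability of `θ₁` at time `t` given signal `z` and prior `m₀`. -/
noncomputable def post (θ₀ θ₁ σ m₀ t z : ℝ) : ℝ :=
  (m₀ / (1 - m₀)) * phi θ₀ θ₁ σ t z / (1 + (m₀ / (1 - m₀)) * phi θ₀ θ₁ σ t z)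

/-!
Write `r = m₀ / (1 - m₀)` for prior odds. Both posteriors are functions of the single quantity
`x = r̲ φ(t, z)`: `π̲ = x / (1 + x)` and `π̄ = c x / (1 + c x)` with `c = r̄ / r̲`. After clearing
denominators the indifference condition becomes a quadratic `A x² + B x + C = 0` with `A > 0` and
`C < 0`, which has exactly one positive root. This fixes `π̲` and `π̄`, and since `z ↦ φ(t, z)` is a
bijection onto `(0, ∞)` it fixes `z̃_t = φ(t, ·)⁻¹ (x / r̲)` as well.
-/

open Set

theorem existsUnique_pos_root_of_quadratic {A B C : ℝ} (hA : 0 < A) (hC : C < 0) :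
    ∃! x : ℝ, 0 < x ∧ A * x ^ 2 + B * x + C = 0 := by
  set D := B ^ 2 - 4 * A * C
  have hBD : B ^ 2 < D := by nlinarith [mul_neg_of_pos_of_neg hA hC]
  have hsqrt : Real.sqrt D ^ 2 = D := Real.sq_sqrt (by nlinarith [sq_nonneg B])
  have hB : B < Real.sqrt D := Real.lt_sqrt_of_sq_lt hBD
  refine ⟨(-B + Real.sqrt D) / (2 * A), ⟨by apply div_pos <;> linarith, ?_⟩, ?_⟩
  · field_simp
    linear_combination hsqrt
  · rintro y ⟨hy, hroot⟩
    set x := (-B + Real.sqrt D) / (2 * A)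
    have hx : 0 < x := by apply div_pos <;> linarith
    have hxroot : A * x ^ 2 + B * x + C = 0 := by
      simp only [x]
      field_simp
      linear_combination hsqrt
    -- `x · (root equation of y) - y · (root equation of x)` eliminates `B`.
    have hfactor : (y - x) * (A * x * y - C) = 0 := by linear_combination x * hroot - y * hxroot
    have hne : A * x * y - C ≠ 0 := by nlinarith [mul_pos (mul_pos hA hx) hy]
    linarith [(mul_eq_zero.mp hfactor).resolve_right hne]

theorem div_one_add_injOn : InjOn (fun y : ℝ => y / (1 + y)) (Ioi 0) := by
  intro y₁ hy₁ y₂ hy₂ h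
  simp only [mem_Ioi] at hy₁ hy₂
  field_simp at h
  linarith

theorem div_one_add_mem_Ioo {y : ℝ} (hy : 0 < y) : y / (1 + y) ∈ Ioo (0 : ℝ) 1 :=
  ⟨by positivity, (div_lt_one (by linarith)).mpr (by linarith)⟩

theorem indifference_iff_quadratic {c x u00 u01 u10 u11 : ℝ} (hc : 0 < c) (hx : 0 < x) :
    x / (1 + x) * u11 + (1 - x / (1 + x)) * u10
        = c * x / (1 + c * x) * u01 + (1 - c * x / (1 + c * x)) * u00 ↔
      c * (u11 - u01) * x ^ 2 + (u11 - u00 + c * (u10 - u01)) * x + (u10 - u00) = 0 := by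
  have : 0 < c * x := mul_pos hc hx
  have : (1 : ℝ) + x ≠ 0 := by linarith
  have : (1 : ℝ) + c * x ≠ 0 := by linarith
  field_simp
  constructor <;> intro h <;> linear_combination h

noncomputable def odds (m : ℝ) : ℝ := m / (1 - m)

theorem odds_pos {m : ℝ} (hm : m ∈ Ioo (0 : ℝ) 1) : 0 < odds m :=
  div_pos hm.1 (sub_pos.mpr hm.2)

theorem post_eq_odds (θ₀ θ₁ σ m t z : ℝ) :
    post θ₀ θ₁ σ m t z = odds m * phi θ₀ θ₁ σ t z / (1 + odds m * phi θ₀ θ₁ σ t z) :=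
  rfl

theorem post_eq_of_odds_eq_mul {θ₀ θ₁ σ m m' c : ℝ} (h : odds m' = c * odds m) (t z : ℝ) :
    post θ₀ θ₁ σ m' t z
      = c * (odds m * phi θ₀ θ₁ σ t z) / (1 + c * (odds m * phi θ₀ θ₁ σ t z)) := by
  rw [post_eq_odds, h, mul_assoc]

noncomputable def phiInv (θ₀ θ₁ σ t p : ℝ) : ℝ :=
  σ ^ 2 / (θ₁ - θ₀) * (Real.log p + (θ₁ ^ 2 - θ₀ ^ 2) / (2 * σ ^ 2) * t)

theorem phi_eq_iff_eq_phiInv {θ₀ θ₁ σ t z p : ℝ} (hθ : θ₀ ≠ θ₁) (hσ : σ ≠ 0) (hp : 0 < p) :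
    phi θ₀ θ₁ σ t z = p ↔ z = phiInv θ₀ θ₁ σ t p := by
  have : θ₁ - θ₀ ≠ 0 := sub_ne_zero.mpr hθ.symm
  rw [phi, phiInv, ← Real.exp_log hp, Real.exp_eq_exp, Real.log_exp]
  field_simp
  constructor <;> intro h <;> linear_combination h

theorem mul_phi_eq_iff_eq_phiInv {θ₀ θ₁ σ t z r x : ℝ} (hθ : θ₀ ≠ θ₁) (hσ : σ ≠ 0) (hr : 0 < r)
    (hx : 0 < x) : r * phi θ₀ θ₁ σ t z = x ↔ z = phiInv θ₀ θ₁ σ t (x / r) := by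
  rw [← phi_eq_iff_eq_phiInv hθ hσ (div_pos hx hr), eq_div_iff hr.ne', mul_comm]

theorem stmt_10_general (θ₀ θ₁ σ mlo mhi u00 u01 u10 u11 : ℝ)
    (hθ : θ₀ < θ₁) (hσ : 0 < σ)
    (hm0 : 0 < mlo) (hm : mlo ≤ mhi) (hm1 : mhi < 1)
    (h2 : u10 < u00) (h3 : u01 < u11) :
    ∃ πlo πhi : ℝ, ∃ ztilde : ℝ → ℝ,
      πlo ∈ Set.Ioo (0 : ℝ) 1 ∧ πhi ∈ Set.Ioo (0 : ℝ) 1 ∧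
      (∀ t : ℝ, 0 ≤ t →
        post θ₀ θ₁ σ mlo t (ztilde t) = πlo ∧
        post θ₀ θ₁ σ mhi t (ztilde t) = πhi) ∧
      πlo * u11 + (1 - πlo) * u10 = πhi * u01 + (1 - πhi) * u00 ∧
      (∀ πlo' πhi' : ℝ, ∀ ztilde' : ℝ → ℝ,
        πlo' ∈ Set.Ioo (0 : ℝ) 1 → πhi' ∈ Set.Ioo (0 : ℝ) 1 →
        (∀ t : ℝ, 0 ≤ t →
          post θ₀ θ₁ σ mlo t (ztilde' t) = πlo' ∧
          post θ₀ θ₁ σ mhi t (ztilde' t) = πhi') →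
        πlo' * u11 + (1 - πlo') * u10 = πhi' * u01 + (1 - πhi') * u00 →
        πlo' = πlo ∧ πhi' = πhi ∧ ∀ t : ℝ, 0 ≤ t → ztilde' t = ztilde t) := by
  have hrlo : 0 < odds mlo := odds_pos ⟨hm0, hm.trans_lt hm1⟩
  have hrhi : 0 < odds mhi := odds_pos ⟨hm0.trans_le hm, hm1⟩
  set c := odds mhi / odds mlo
  have hc : 0 < c := div_pos hrhi hrlo
  have hodds : odds mhi = c * odds mlo := (div_mul_cancel₀ _ hrlo.ne').symm
  obtain ⟨x, ⟨hx, hroot⟩, hxuniq⟩ := existsUnique_pos_root_of_quadratic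
    (B := u11 - u00 + c * (u10 - u01)) (mul_pos hc (sub_pos.mpr h3)) (sub_neg.mpr h2)
  have hpos : ∀ t z, 0 < odds mlo * phi θ₀ θ₁ σ t z := fun t z => mul_pos hrlo (Real.exp_pos _)
  have hsolve t z := mul_phi_eq_iff_eq_phiInv (t := t) (z := z) hθ.ne hσ.ne' hrlo hx
  refine ⟨x / (1 + x), c * x / (1 + c * x), fun t => phiInv θ₀ θ₁ σ t (x / odds mlo),
    div_one_add_mem_Ioo hx, div_one_add_mem_Ioo (mul_pos hc hx), fun t _ => ?_,
    (indifference_iff_quadratic hc hx).mpr hroot, ?_⟩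
  · rw [post_eq_of_odds_eq_mul hodds, post_eq_odds, (hsolve t _).mpr rfl]
    exact ⟨rfl, rfl⟩
  · rintro πlo' πhi' z' - - hpost hind
    -- The posteriors are constant in `t`, so reading them at `t = 0` already pins down `x`.
    obtain ⟨hlo0, hhi0⟩ := hpost 0 le_rfl
    rw [post_eq_odds] at hlo0
    rw [post_eq_of_odds_eq_mul hodds] at hhi0
    subst hlo0 hhi0
    have hx0 : odds mlo * phi θ₀ θ₁ σ 0 (z' 0) = x :=
      hxuniq _ ⟨hpos 0 _, (indifference_iff_quadratic hc (hpos 0 _)).mp hind⟩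
    refine ⟨by rw [hx0], by rw [hx0], fun t ht => (hsolve t _).mp ?_⟩
    have hlo := (hpost t ht).1
    rw [post_eq_odds, hx0] at hlo
    exact div_one_add_injOn (hpos t _) hx hlo

theorem stmt_10 (θ₀ θ₁ σ mlo mhi u00 u01 u10 u11 : ℝ)
    (hθ : θ₀ < θ₁) (hσ : 0 < σ)
    (hm0 : 0 < mlo) (hm : mlo ≤ mhi) (hm1 : mhi < 1)
    (h1 : u10 < u11) (h0 : u01 < u00) (h2 : u10 < u00) (h3 : u01 < u11) :
    ∃ πlo πhi : ℝ, ∃ ztilde : ℝ → ℝ,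
      πlo ∈ Set.Ioo (0 : ℝ) 1 ∧ πhi ∈ Set.Ioo (0 : ℝ) 1 ∧
      (∀ t : ℝ, 0 ≤ t →
        post θ₀ θ₁ σ mlo t (ztilde t) = πlo ∧
        post θ₀ θ₁ σ mhi t (ztilde t) = πhi) ∧
      πlo * u11 + (1 - πlo) * u10 = πhi * u01 + (1 - πhi) * u00 ∧
      (∀ πlo' πhi' : ℝ, ∀ ztilde' : ℝ → ℝ,
        πlo' ∈ Set.Ioo (0 : ℝ) 1 → πhi' ∈ Set.Ioo (0 : ℝ) 1 →
        (∀ t : ℝ, 0 ≤ t →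
          post θ₀ θ₁ σ mlo t (ztilde' t) = πlo' ∧
          post θ₀ θ₁ σ mhi t (ztilde' t) = πhi') →
        πlo' * u11 + (1 - πlo') * u10 = πhi' * u01 + (1 - πhi') * u00 →
        πlo' = πlo ∧ πhi' = πhi ∧ ∀ t : ℝ, 0 ≤ t → ztilde' t = ztilde t) :=
  stmt_10_general θ₀ θ₁ σ mlo mhi u00 u01 u10 u11 hθ hσ hm0 hm hm1 h2 h3
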